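/- If r : ℝ → ℂ is the Fourier transform of a probability measure ρ on ℝ that is not a single Dirac mass, then the set D = {t ∈ ℝ : |r(t)| = 1} is discrete (every point of D is isolated in D). -/

import Mathlib

/-!
If `‖charFun μ t‖ = 1`, equality holds in `‖∫ exp (i t x) dμ‖ ≤ 1`, so by strict convexity of the
unit disc `exp (i t x)` is `μ`-a.e. constant. Hence the frequencies of modulus one form an additive
subgroup `D` of `ℝ`, closed by continuity of `charFun μ`. A closed proper subgroup of `ℝ` is cyclic,
so its points are isolated. Finally `D ≠ ℝ` unless `μ` is a Dirac mass: if `1, √2 ∈ D`, then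
`μ`-a.e. `x` lies both in a coset of `2πℤ` and in a coset of `(2π/√2)ℤ`, and two such cosets meet
in at most one point because `√2` is irrational.
-/

open MeasureTheory Complex

open scoped RealInnerProductSpace

lemma Circle.eq_of_exp_eq_of_exp_mul_eq {α x y : ℝ} (hα : Irrational α)
    (h₁ : Circle.exp x = Circle.exp y) (h₂ : Circle.exp (α * x) = Circle.exp (α * y)) : x = y := by
  obtain ⟨m, hm⟩ := Circle.exp_eq_exp.1 h₁
  obtain ⟨n, hn⟩ := Circle.exp_eq_exp.1 h₂
  have hαm : α * m = n := by
    have h2π : 2 * Real.pi ≠ 0 := by positivity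
    apply mul_right_cancel₀ h2π
    linear_combination hn - α * hm
  obtain rfl : m = 0 := by
    by_contra hm0
    exact (hα.mul_intCast hm0).ne_int n hαm
  simpa using hm

lemma AddSubgroup.exists_pos_forall_abs_lt_imp_eq_zero {H : AddSubgroup ℝ}
    (hc : IsClosed (H : Set ℝ)) (hH : H ≠ ⊤) : ∃ ε > 0, ∀ x ∈ H, |x| < ε → x = 0 := by
  obtain ⟨a, rfl⟩ := H.dense_or_cyclic.resolve_left fun hd ↦
    hH (AddSubgroup.coe_eq_univ.1 (hc.closure_eq ▸ hd.closure_eq))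
  rcases eq_or_ne a 0 with rfl | ha
  · exact ⟨1, one_pos, fun x hx _ ↦ by simpa [AddSubgroup.closure_singleton_zero] using hx⟩
  refine ⟨|a|, abs_pos.2 ha, fun x hx hxa ↦ ?_⟩
  obtain ⟨k, rfl⟩ := AddSubgroup.mem_closure_singleton.1 hx
  rw [zsmul_eq_mul, abs_mul] at hxa
  have hk : |(k : ℝ)| < 1 := (mul_lt_iff_lt_one_left (abs_pos.2 ha)).1 hxa
  obtain rfl : k = 0 := Int.abs_lt_one_iff.1 (by exact_mod_cast hk)
  simp

namespace MeasureTheory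

lemma Measure.eq_dirac_of_ae_eq {α : Type*} [MeasurableSpace α] {μ : Measure α}
    [IsProbabilityMeasure μ] {φ : α} (h : ∀ᵐ x ∂μ, x = φ) : μ = Measure.dirac φ :=
  calc μ = μ.map id := Measure.map_id.symm
    _ = μ.map (fun _ ↦ φ) := Measure.map_congr h
    _ = Measure.dirac φ := by simp [Measure.map_const]

section charFun

variable {E : Type*} [NormedAddCommGroup E] [InnerProductSpace ℝ E] [MeasurableSpace E]
  {μ : Measure E} [IsProbabilityMeasure μ]

lemma ae_eq_charFun_of_norm_charFun_eq_one {t : E} (h : ‖charFun μ t‖ = 1) :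
    (fun x ↦ exp (⟪x, t⟫ * I)) =ᵐ[μ] fun _ ↦ charFun μ t := by
  have h_le : ∀ᵐ x ∂μ, ‖exp (⟪x, t⟫ * I)‖ ≤ 1 :=
    ae_of_all _ fun x ↦ (norm_exp_ofReal_mul_I _).le
  have h_avg := (ae_eq_const_or_norm_integral_lt_of_norm_le_const h_le).resolve_right
    (by simp [← charFun_apply, h])
  rwa [average_eq_integral, ← charFun_apply] at h_avg

lemma charFun_add_of_norm_eq_one {s t : E} (hs : ‖charFun μ s‖ = 1) (ht : ‖charFun μ t‖ = 1) :
    charFun μ (s + t) = charFun μ s * charFun μ t := by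
  have h : (fun x ↦ exp (⟪x, s + t⟫ * I)) =ᵐ[μ] fun _ ↦ charFun μ s * charFun μ t := by
    filter_upwards [ae_eq_charFun_of_norm_charFun_eq_one hs,
      ae_eq_charFun_of_norm_charFun_eq_one ht] with x hxs hxt
    rw [inner_add_right, ofReal_add, add_mul, exp_add, hxs, hxt]
  simp [charFun_apply, integral_congr_ae h]

variable (μ) in
def charFunNormOneSubgroup : AddSubgroup E where
  carrier := {t | ‖charFun μ t‖ = 1}
  add_mem' {s t} hs ht := by
    simp only [Set.mem_ofPred_eq] at hs ht ⊢
    rw [charFun_add_of_norm_eq_one hs ht, norm_mul, hs, ht, mul_one]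
  zero_mem' := by simp
  neg_mem' {t} ht := by simpa [charFun_neg] using ht

lemma mem_charFunNormOneSubgroup {t : E} : t ∈ charFunNormOneSubgroup μ ↔ ‖charFun μ t‖ = 1 :=
  Iff.rfl

lemma isClosed_charFunNormOneSubgroup [BorelSpace E] [SecondCountableTopology E] :
    IsClosed (charFunNormOneSubgroup μ : Set E) :=
  isClosed_eq continuous_charFun.norm continuous_const

end charFun

lemma charFunNormOneSubgroup_ne_top {μ : Measure ℝ} [IsProbabilityMeasure μ]
    (hμ : ∀ φ, μ ≠ Measure.dirac φ) : charFunNormOneSubgroup μ ≠ ⊤ := by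
  intro htop
  have h_const (t : ℝ) : ∀ᵐ x ∂μ, (Circle.exp (t * x) : ℂ) = charFun μ t := by
    have ht : t ∈ charFunNormOneSubgroup μ := htop ▸ AddSubgroup.mem_top t
    filter_upwards [ae_eq_charFun_of_norm_charFun_eq_one ht] with x hx
    simpa [mul_comm] using hx
  obtain ⟨φ, hφ₁, hφ₂⟩ := ((h_const 1).and (h_const √2)).exists
  refine hμ φ (Measure.eq_dirac_of_ae_eq ?_)
  filter_upwards [h_const 1, h_const √2] with x hx₁ hx₂
  exact Circle.eq_of_exp_eq_of_exp_mul_eq irrational_sqrt_two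
    (by simpa using Circle.ext (hx₁.trans hφ₁.symm)) (Circle.ext (hx₂.trans hφ₂.symm))

end MeasureTheory

theorem winding_D_discrete (ρ : Measure ℝ) [IsProbabilityMeasure ρ]
    (hnd : ∀ φ : ℝ, ρ ≠ Measure.dirac φ)
    (r : ℝ → ℂ)
    (hr : ∀ t : ℝ, r t = ∫ l : ℝ, Complex.exp (-(Complex.I * t * l)) ∂ρ) :
    ∀ t : ℝ, ‖r t‖ = 1 →
      ∃ ε > 0, ∀ s : ℝ, ‖r s‖ = 1 → |s - t| < ε → s = t := by
  have hmem (s : ℝ) : ‖r s‖ = 1 ↔ s ∈ charFunNormOneSubgroup ρ := by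
    have hrs : r s = charFun ρ (-s) := by
      rw [hr, charFun_apply_real]
      congr with l
      congr 1
      push_cast
      ring
    rw [hrs, ← neg_mem_iff, mem_charFunNormOneSubgroup]
  intro t ht
  obtain ⟨ε, hε, hD⟩ := AddSubgroup.exists_pos_forall_abs_lt_imp_eq_zero
    isClosed_charFunNormOneSubgroup (charFunNormOneSubgroup_ne_top hnd)
  exact ⟨ε, hε, fun s hs hst ↦ sub_eq_zero.1 (hD _ (sub_mem ((hmem s).1 hs) ((hmem t).1 ht)) hst)⟩
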